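/- Let k ≥ 1, 0 ≤ s < k, and let σ be the permutation of {1, …, 3^k − 1} given by σ(i) = 2i mod 3^k. Then the cycle (orbit) of σ containing 3^s has length exactly 2·3^(k−1−s). -/

import Mathlib

/-!
Write 3^k = 3^(n+1) · 3^s. Then 2^t · 3^s ≡ 3^s (mod 3^k) exactly when 3^(n+1) ∣ 2^t - 1, so the
cycle length is the multiplicative order of 2 modulo 3^(n+1). Modulo 3 this forces t = 2u even,
and lifting the exponent gives v₃(4^u - 1) = 1 + v₃(u), so the order is 2 · 3^n.
-/

theorem Nat.mod_eq_one_iff_dvd_sub_one {a m : ℕ} (hm : 1 < m) (ha : 0 < a) :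
    a % m = 1 ↔ m ∣ a - 1 := by
  rw [← Nat.modEq_iff_dvd' ha, Nat.ModEq, Nat.mod_eq_of_lt hm, eq_comm]

theorem Nat.mul_mod_mul_eq_self_iff {a d m : ℕ} (hd : 0 < d) (hm : 1 < m) (ha : 0 < a) :
    a * d % (m * d) = d ↔ m ∣ a - 1 := by
  rw [Nat.mul_mod_mul_right, Nat.mul_eq_right hd.ne', Nat.mod_eq_one_iff_dvd_sub_one hm ha]

theorem Nat.isLeast_pos_dvd {d : ℕ} (hd : 0 < d) : IsLeast {t | 0 < t ∧ d ∣ t} d :=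
  ⟨⟨hd, dvd_rfl⟩, fun _ ⟨ht, hdt⟩ => Nat.le_of_dvd ht hdt⟩

theorem three_dvd_two_pow_sub_one_iff (t : ℕ) : 3 ∣ 2 ^ t - 1 ↔ 2 ∣ t := by
  have h4 : 4 ^ (t / 2) % 3 = 1 := by rw [Nat.pow_mod]; norm_num
  have h2 : 2 ^ t = 4 ^ (t / 2) * 2 ^ (t % 2) := by
    rw [show (4 : ℕ) = 2 ^ 2 by rfl, ← pow_mul, ← pow_add, Nat.div_add_mod]
  rcases Nat.mod_two_eq_zero_or_one t with h | h <;> rw [h2, h] <;> omega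

theorem three_pow_succ_dvd_four_pow_sub_one_iff (n u : ℕ) :
    3 ^ (n + 1) ∣ 4 ^ u - 1 ↔ 3 ^ n ∣ u := by
  have hlte := Nat.emultiplicity_pow_sub_pow Nat.prime_three (by decide) (x := 4) (y := 1)
    (by norm_num) (by norm_num) u
  rw [one_pow, show (4 : ℕ) - 1 = 3 ^ 1 by rfl,
    emultiplicity_pow_self_of_prime Nat.prime_three.prime] at hlte
  rw [pow_dvd_iff_le_emultiplicity, pow_dvd_iff_le_emultiplicity, hlte, Nat.cast_succ,
    Nat.cast_one, add_comm (1 : ℕ∞)]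
  exact WithTop.add_le_add_iff_right ENat.one_ne_top

theorem three_pow_succ_dvd_two_pow_sub_one_iff (n t : ℕ) :
    3 ^ (n + 1) ∣ 2 ^ t - 1 ↔ 2 * 3 ^ n ∣ t := by
  suffices h : ∀ u, 3 ^ (n + 1) ∣ 2 ^ (2 * u) - 1 ↔ 2 * 3 ^ n ∣ 2 * u by
    constructor
    · intro hdvd
      have h3 : 3 ∣ 2 ^ t - 1 := (dvd_pow_self 3 n.succ_ne_zero).trans hdvd
      obtain ⟨u, rfl⟩ := (three_dvd_two_pow_sub_one_iff t).1 h3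
      exact (h u).1 hdvd
    · intro hdvd
      obtain ⟨u, rfl⟩ := (dvd_mul_right 2 _).trans hdvd
      exact (h u).2 hdvd
  intro u
  rw [pow_mul, Nat.mul_dvd_mul_iff_left two_pos]
  exact three_pow_succ_dvd_four_pow_sub_one_iff n u

theorem cycle_length_of_three_pow_general (k s : ℕ) (hs : s < k) :
    IsLeast {t : ℕ | 0 < t ∧ 2 ^ t * 3 ^ s % 3 ^ k = 3 ^ s} (2 * 3 ^ (k - 1 - s)) := by
  obtain ⟨n, rfl⟩ : ∃ n, k = n + 1 + s := ⟨k - 1 - s, by omega⟩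
  have hcycle : ∀ t, 2 ^ t * 3 ^ s % 3 ^ (n + 1 + s) = 3 ^ s ↔ 2 * 3 ^ n ∣ t := fun t => by
    rw [pow_add, Nat.mul_mod_mul_eq_self_iff (by positivity) (Nat.one_lt_pow n.succ_ne_zero
      (by norm_num)) (by positivity), three_pow_succ_dvd_two_pow_sub_one_iff]
  simp only [hcycle, show n + 1 + s - 1 - s = n by omega]
  exact Nat.isLeast_pos_dvd (by positivity)

/-- For k ≥ 1, 0 ≤ s < k, and σ(i) = 2i mod 3^k on {1,…,3^k−1}, the cycle of σ
containing 3^s has length exactly 2·3^(k−1−s): that value is the least positive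
t with σ^t(3^s) = 3^s. -/
theorem cycle_length_of_three_pow (k s : ℕ) (hk : 1 ≤ k) (hs : s < k) :
    IsLeast {t : ℕ | 0 < t ∧ 2 ^ t * 3 ^ s % 3 ^ k = 3 ^ s} (2 * 3 ^ (k - 1 - s)) :=
  cycle_length_of_three_pow_general k s hs
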